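/- Conjugation by a Heisenberg–Weyl operator translates the phase space: for all a, u ∈ ZMod d × ZMod d, T_a * A_u * T_aᴴ = A_(u + a). -/

import Mathlib

/-!
Write `ψ(x) = ω ^ x.val` for the additive character of `ZMod d` given by `ω`. Entrywise,
`T_a x y = [x = y + a₂] ψ(a₁ x - a₁ a₂ / 2)`, and multiplying two such matrices gives
`T_a T_u = ψ((a₁ u₂ - u₁ a₂) / 2) T_{u+a}`; this is where `2` must be invertible, i.e. where `d`
is odd. The phase is unimodular, so it cancels in the conjugation `M ↦ T M Tᴴ`; hence
conjugating `A_u = T_u A_0 T_uᴴ` by `T_a` gives `T_{u+a} A_0 T_{u+a}ᴴ = A_{u+a}`.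
-/

open Matrix Complex

/-- ω = exp(2πi/d). -/
noncomputable def omegaC (d : ℕ) : ℂ := Complex.exp (2 * Real.pi * Complex.I / d)

/-- The clock matrix `Z`, with `Z x x = ω ^ x.val`. -/
noncomputable def Zmat (d : ℕ) : Matrix (ZMod d) (ZMod d) ℂ :=
  Matrix.diagonal (fun x => omegaC d ^ x.val)

/-- The shift matrix `X`, with `X x y = 1` iff `x = y + 1`. -/
noncomputable def Xmat (d : ℕ) : Matrix (ZMod d) (ZMod d) ℂ :=
  Matrix.of fun x y => if x = y + 1 then 1 else 0

/-- The Heisenberg–Weyl operator `T_a`. -/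
noncomputable def TW (d : ℕ) [NeZero d] (a : ZMod d × ZMod d) : Matrix (ZMod d) (ZMod d) ℂ :=
  omegaC d ^ ((-((2 : ZMod d)⁻¹ * a.1 * a.2)).val) • (Zmat d ^ a.1.val * Xmat d ^ a.2.val)

/-- The phase point operator at the origin, `A_0 = (1/d) • ∑ a, T_a`. -/
noncomputable def Apoint0 (d : ℕ) [NeZero d] : Matrix (ZMod d) (ZMod d) ℂ :=
  (1 / (d : ℂ)) • ∑ a : ZMod d × ZMod d, TW d a

/-- The phase point operator `A_u = T_u * A_0 * T_uᴴ`. -/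
noncomputable def Apoint (d : ℕ) [NeZero d] (u : ZMod d × ZMod d) : Matrix (ZMod d) (ZMod d) ℂ :=
  TW d u * Apoint0 d * (TW d u)ᴴ

lemma Matrix.smul_mul_mul_conjTranspose_smul {m n R : Type*} [Fintype n] [CommSemiring R]
    [StarRing R] {c : R} (hc : star c * c = 1) (M : Matrix m n R) (A : Matrix n n R) :
    c • M * A * (c • M)ᴴ = M * A * Mᴴ := by
  rw [conjTranspose_smul, Matrix.mul_smul, Matrix.smul_mul, Matrix.smul_mul, smul_smul, hc,
    one_smul]

lemma ZMod.two_mul_inv_two_of_odd {d : ℕ} (hodd : Odd d) : (2 : ZMod d) * 2⁻¹ = 1 :=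
  ZMod.mul_inv_of_unit _ <| by
    simpa using (ZMod.isUnit_iff_coprime 2 d).mpr (Nat.coprime_two_left.mpr hodd)

lemma omegaC_pow_self (d : ℕ) [NeZero d] : omegaC d ^ d = 1 :=
  (Complex.isPrimitiveRoot_exp d (NeZero.ne d)).pow_eq_one

noncomputable def omegaChar (d : ℕ) [NeZero d] : AddChar (ZMod d) ℂ :=
  AddChar.zmodChar d (omegaC_pow_self d)

lemma omegaC_pow_eq_omegaChar (d : ℕ) [NeZero d] (n : ℕ) : omegaC d ^ n = omegaChar d n :=
  (AddChar.zmodChar_apply' _ n).symm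

lemma star_omegaChar_mul_self (d : ℕ) [NeZero d] (x : ZMod d) :
    star (omegaChar d x) * omegaChar d x = 1 := by
  rw [Complex.star_def, ← AddChar.map_neg_eq_conj, ← AddChar.map_add_eq_mul, neg_add_cancel,
    AddChar.map_zero_eq_one]

lemma Xmat_pow_apply (d : ℕ) [NeZero d] (n : ℕ) (x y : ZMod d) :
    (Xmat d ^ n) x y = if x = y + n then 1 else 0 := by
  induction n generalizing x with
  | zero => simp [Matrix.one_apply]
  | succ n ih =>
    rw [pow_succ', mul_apply]
    simp_rw [ih]
    simp only [Xmat, of_apply, mul_ite, mul_one, mul_zero, Finset.sum_ite_eq', Finset.mem_univ,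
      if_true, Nat.cast_succ, add_assoc]

lemma TW_apply (d : ℕ) [NeZero d] (a : ZMod d × ZMod d) (x y : ZMod d) :
    TW d a x y = if x = y + a.2 then omegaChar d (a.1 * x - 2⁻¹ * a.1 * a.2) else 0 := by
  rw [TW, Matrix.smul_apply, Zmat, diagonal_pow, diagonal_mul, Xmat_pow_apply, ZMod.natCast_val,
    ZMod.cast_id', id]
  split_ifs
  · rw [Pi.pow_apply, mul_one, ← pow_mul, smul_eq_mul, omegaC_pow_eq_omegaChar,
      omegaC_pow_eq_omegaChar, ← AddChar.map_add_eq_mul]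
    push_cast [ZMod.natCast_val, ZMod.cast_id', id]
    congr 1
    ring
  · rw [mul_zero, smul_zero]

lemma TW_mul_TW (d : ℕ) [NeZero d] (hodd : Odd d) (a u : ZMod d × ZMod d) :
    TW d a * TW d u = omegaChar d (2⁻¹ * (a.1 * u.2 - u.1 * a.2)) • TW d (u + a) := by
  ext x y
  rw [mul_apply, Matrix.smul_apply, Finset.sum_eq_single (y + u.2)]
  · rw [TW_apply, TW_apply, TW_apply, if_pos rfl, Prod.snd_add, ← add_assoc]
    by_cases h : x = y + u.2 + a.2
    · rw [if_pos h, if_pos h, smul_eq_mul, ← AddChar.map_add_eq_mul, ← AddChar.map_add_eq_mul]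
      congr 1
      subst h
      simp only [Prod.fst_add]
      -- the two exponents differ by `u₁ a₂ (2 * 2⁻¹ - 1)`
      linear_combination (u.1 * a.2) * ZMod.two_mul_inv_two_of_odd hodd
    · rw [if_neg h, if_neg h, zero_mul, smul_zero]
  · intro z _ hz
    rw [TW_apply d u, if_neg hz, mul_zero]
  · simp

theorem heisenberg_weyl_translates_phase_space_general (d : ℕ) [NeZero d] (hodd : Odd d)
    (a u : ZMod d × ZMod d) :
    TW d a * Apoint d u * (TW d a)ᴴ = Apoint d (u + a) :=
  calc TW d a * Apoint d u * (TW d a)ᴴ = TW d a * TW d u * Apoint0 d * (TW d a * TW d u)ᴴ := by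
        simp only [Apoint, conjTranspose_mul, Matrix.mul_assoc]
    _ = Apoint d (u + a) := by
        rw [TW_mul_TW d hodd, smul_mul_mul_conjTranspose_smul (star_omegaChar_mul_self d _),
          Apoint]

/-- Conjugation by a Heisenberg–Weyl operator translates the phase space. -/
theorem heisenberg_weyl_translates_phase_space (d : ℕ) [NeZero d] (hodd : Odd d) (hd : 1 < d)
    (a u : ZMod d × ZMod d) :
    TW d a * Apoint d u * (TW d a)ᴴ = Apoint d (u + a) :=
  heisenberg_weyl_translates_phase_space_general d hodd a u
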